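/- arXiv:2504.16540 — 2 statements merged into one kernel-verified Lean document; each statement's English description precedes it below -/
import Mathlib

section
/- The 1-form α of Equation (4.1) is a contact form on the Brieskorn link: for every z ∈ Σ(a), the alternating 2-form ω is nondegenerate on the hyperplane ξ_z = {v ∈ ℂ^{n+1} : Σ_j a_j z_j^{a_j−1} v_j = 0, Re⟨z,v⟩ = 0, and α_z(v) = 0}; that is, for every nonzero v ∈ ξ_z there exists w ∈ ξ_z with ω(v,w) ≠ 0. -/
/-!
Write `⟪u, v⟫_a = Σ_j a_j conj(u_j) v_j`, so that `ω = ½ Im ⟪·, ·⟫_a`, `α_z = ¼ Im ⟪z, ·⟫_a` and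
`Re⟨z, ·⟩ = Re ⟪z, ·⟫_1`. For `v ∈ ξ_z` the vector `i v` still satisfies `df_z(i v) = 0`, and so
does `y = (z_j / a_j)_j`, because Euler's identity for the weighted homogeneous
`f = Σ z_j ^ a_j` gives `df_z(y) = f(z) = 0`. Since `⟪z, y⟫_1 = S > 0` and `⟪z, y⟫_a = ‖z‖² = N`
are real, a complex multiple of `y` corrects the two real conditions: with `B = Im ⟪z, v⟫_1` and
`C = Re ⟪z, v⟫_a`, the vector `w = N S i v + (N B - S C i) y` lies in `ξ_z` and
`Im ⟪v, w⟫_a = N (S T - B²)`, `T = ⟪v, v⟫_a`. Cauchy–Schwarz gives `B² ≤ S T`, with equality only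
for `v ∈ iℝ y`, which `α_z(v) = 0` excludes unless `v = 0`.
-/

open Complex ComplexConjugate Finset

variable {ι : Type*} [Fintype ι]

def weightedInner (a : ι → ℝ) (u v : ι → ℂ) : ℂ := ∑ j, (a j : ℂ) * (conj (u j) * v j)

section weightedInner

variable {a : ι → ℝ} (u v y : ι → ℂ)

lemma weightedInner_add_right :
    weightedInner a u (v + y) = weightedInner a u v + weightedInner a u y := by
  simp only [weightedInner, Pi.add_apply, mul_add, sum_add_distrib]

lemma weightedInner_smul_right (c : ℂ) : weightedInner a u (c • v) = c * weightedInner a u v := by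
  simp only [weightedInner, Pi.smul_apply, smul_eq_mul, mul_sum]
  exact sum_congr rfl fun j _ => by ring

lemma weightedInner_swap : weightedInner a v u = conj (weightedInner a u v) := by
  simp only [weightedInner, map_sum, map_mul, conj_ofReal, conj_conj]
  exact sum_congr rfl fun j _ => by ring

lemma weightedInner_self : weightedInner a u u = ((∑ j, a j * normSq (u j) : ℝ) : ℂ) := by
  simp only [weightedInner, ← normSq_eq_conj_mul_self, ofReal_sum, ofReal_mul]

lemma weightedInner_div_right (b : ι → ℝ) :
    weightedInner b u (fun j => y j / a j) = weightedInner (b / a) u y := by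
  simp only [weightedInner, Pi.div_apply, ofReal_div]
  exact sum_congr rfl fun j _ => by ring

lemma weightedInner_div_self (ha : ∀ j, a j ≠ 0) :
    weightedInner a u (fun j => y j / a j) = weightedInner 1 u y := by
  rw [weightedInner_div_right]
  congr
  exact funext fun j => div_self (ha j)

lemma im_weightedInner : (weightedInner a u v).im = ∑ j, a j * (conj (u j) * v j).im := by
  simp only [weightedInner, im_sum, im_ofReal_mul]

lemma re_weightedInner_one : (weightedInner 1 u v).re = ∑ j, (conj (u j) * v j).re := by
  simp only [weightedInner, Pi.one_apply, ofReal_one, one_mul, re_sum]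

end weightedInner

lemma sum_mul_normSq_pos {r : ι → ℝ} (hr : ∀ j, 0 < r j) {z : ι → ℂ} (hz : z ≠ 0) :
    0 < ∑ j, r j * normSq (z j) := by
  obtain ⟨j, hj⟩ := Function.ne_iff.1 hz
  exact sum_pos' (fun i _ => mul_nonneg (hr i).le (normSq_nonneg _))
    ⟨j, mem_univ j, mul_pos (hr j) (normSq_pos.2 hj)⟩

lemma sum_normSq_pos {z : ι → ℂ} (hz : z ≠ 0) : 0 < ∑ j, normSq (z j) := by
  simpa only [one_mul] using sum_mul_normSq_pos (fun _ => one_pos) hz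

lemma mul_normSq_add_mul_I_mul_div {a : ℝ} (ha : a ≠ 0) (t : ℝ) (v z : ℂ) :
    a * normSq (v + t * I * (z / a)) =
      a⁻¹ * normSq z * (t * t) + 2 * (conj z * v).im * t + a * normSq v := by
  simp only [normSq_apply, add_re, add_im, mul_re, mul_im, div_re, div_im, ofReal_re, ofReal_im,
    I_re, I_im, conj_re, conj_im]
  field_simp
  ring

section

variable {a : ι → ℝ} {z v : ι → ℂ}

lemma sq_im_weightedInner_one_lt (ha : ∀ j, 0 < a j) (hz : z ≠ 0) (hv : v ≠ 0)
    (hα : (weightedInner a z v).im = 0) :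
    (weightedInner 1 z v).im ^ 2 < (∑ j, (a j)⁻¹ * normSq (z j)) * ∑ j, a j * normSq (v j) := by
  set y : ι → ℂ := fun j => z j / a j
  set q : ℝ → ℝ := fun t => ∑ j, a j * normSq (v j + t * I * y j)
  have hq : ∀ t, q t = (∑ j, (a j)⁻¹ * normSq (z j)) * (t * t)
      + 2 * (weightedInner 1 z v).im * t + ∑ j, a j * normSq (v j) := fun t => by
    simp only [q, y, mul_normSq_add_mul_I_mul_div (ha _).ne', sum_add_distrib, ← sum_mul,
      im_weightedInner, Pi.one_apply, one_mul, mul_sum]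
  have hq_pos : ∀ t, 0 < q t := by
    intro t
    refine (sum_nonneg fun j _ => mul_nonneg (ha j).le (normSq_nonneg _)).lt_of_ne' fun h => hv ?_
    have hvy : v = (-(t * I)) • y := funext fun j => by
      have := (sum_eq_zero_iff_of_nonneg fun j _ => mul_nonneg (ha j).le (normSq_nonneg _)).1 h j
        (mem_univ j)
      rw [mul_eq_zero, normSq_eq_zero] at this
      simp only [Pi.smul_apply, smul_eq_mul]
      linear_combination this.resolve_left (ha j).ne'
    have ht : t = 0 := by
      rw [hvy, weightedInner_smul_right, weightedInner_div_self _ _ fun j => (ha j).ne',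
        weightedInner_self] at hα
      simpa [(sum_normSq_pos hz).ne'] using hα
    simpa [ht] using hvy
  have hS : 0 < ∑ j, (a j)⁻¹ * normSq (z j) := sum_mul_normSq_pos (fun j => inv_pos.2 (ha j)) hz
  have hdiscrim := discrim_lt_zero hS.ne' fun t => hq t ▸ hq_pos t
  rw [discrim] at hdiscrim
  linarith

theorem exists_dotProduct_eq_zero_and_im_weightedInner_pos (ha : ∀ j, 0 < a j) (hz : z ≠ 0)
    {d : ι → ℂ} (hdz : d ⬝ᵥ (fun j => z j / a j) = 0) (hv : v ≠ 0) (hdv : d ⬝ᵥ v = 0)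
    (hre : (weightedInner 1 z v).re = 0) (hα : (weightedInner a z v).im = 0) :
    ∃ w, d ⬝ᵥ w = 0 ∧ (weightedInner 1 z w).re = 0 ∧ (weightedInner a z w).im = 0 ∧
      0 < (weightedInner a v w).im := by
  set y : ι → ℂ := fun j => z j / a j
  set N := ∑ j, normSq (z j)
  set S := ∑ j, (a j)⁻¹ * normSq (z j)
  set T := ∑ j, a j * normSq (v j)
  set B := (weightedInner 1 z v).im
  set C := (weightedInner a z v).re
  have hzv₁ : weightedInner 1 z v = B * I := Complex.ext (by simp [hre]) (by simp [B])
  have hzv : weightedInner a z v = C := Complex.ext (by simp [C]) (by simp [hα])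
  have hzy₁ : weightedInner 1 z y = S := by
    rw [weightedInner_div_right, weightedInner_self]
    simp [S]
  have hzy : weightedInner a z y = N := by
    rw [weightedInner_div_self _ _ fun j => (ha j).ne', weightedInner_self]
    simp [N]
  have hvy : weightedInner a v y = -(B * I) := by
    rw [weightedInner_div_self _ _ fun j => (ha j).ne', weightedInner_swap, hzv₁]
    simp only [map_mul, conj_ofReal, conj_I, mul_neg]
  have hvv : weightedInner a v v = T := weightedInner_self _
  refine ⟨(N * S * I) • v + (N * B - S * C * I) • y, ?_, ?_, ?_, ?_⟩
  · rw [dotProduct_add, dotProduct_smul, dotProduct_smul, hdv, hdz, smul_zero, smul_zero, add_zero]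
  all_goals rw [weightedInner_add_right, weightedInner_smul_right, weightedInner_smul_right]
  · rw [hzv₁, hzy₁]
    simp only [add_re, mul_re, mul_im, sub_re, sub_im, ofReal_re, ofReal_im, I_re, I_im]
    ring
  · rw [hzv, hzy]
    simp only [add_im, mul_re, mul_im, sub_re, sub_im, ofReal_re, ofReal_im, I_re, I_im]
    ring
  · rw [hvv, hvy]
    have hCS := sq_im_weightedInner_one_lt ha hz hv hα
    calc 0 < N * (S * T - B ^ 2) := mul_pos (sum_normSq_pos hz) (by linarith)
      _ = _ := by
        simp only [add_im, mul_re, mul_im, neg_re, neg_im, sub_re, sub_im, ofReal_re, ofReal_im,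
          I_re, I_im]
        ring

end

lemma natCast_mul_pow_sub_one_mul_div {K : Type*} [Field K] [CharZero K] {k : ℕ} (hk : k ≠ 0)
    (x : K) : k * x ^ (k - 1) * (x / k) = x ^ k := by
  obtain ⟨m, rfl⟩ := Nat.exists_eq_succ_of_ne_zero hk
  have : (m.succ : K) ≠ 0 := Nat.cast_ne_zero.2 hk
  rw [Nat.succ_sub_one, pow_succ]
  field_simp

theorem brieskorn_contact_condition_general
    (n : ℕ) (a : Fin (n + 1) → ℕ) (ha : ∀ j, 2 ≤ a j)
    (z : Fin (n + 1) → ℂ)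
    (hz1 : ∑ j, z j ^ a j = 0)
    (hz2 : ∑ j, Complex.normSq (z j) = 1) :
    ∀ v : Fin (n + 1) → ℂ, v ≠ 0 →
      (∑ j, (a j : ℂ) * z j ^ (a j - 1) * v j = 0) →
      (∑ j, ((starRingEnd ℂ) (z j) * v j).re = 0) →
      ((1 / 4 : ℝ) * ∑ j, (a j : ℝ) * ((starRingEnd ℂ) (z j) * v j).im = 0) →
      ∃ w : Fin (n + 1) → ℂ,
        (∑ j, (a j : ℂ) * z j ^ (a j - 1) * w j = 0) ∧
        (∑ j, ((starRingEnd ℂ) (z j) * w j).re = 0) ∧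
        ((1 / 4 : ℝ) * ∑ j, (a j : ℝ) * ((starRingEnd ℂ) (z j) * w j).im = 0) ∧
        (1 / 2 : ℝ) * ∑ j, (a j : ℝ) * ((starRingEnd ℂ) (v j) * w j).im ≠ 0 := by
  intro v hv hdv hre hα
  have ha_ne : ∀ j, a j ≠ 0 := fun j => by linarith [ha j]
  have hz : z ≠ 0 := by rintro rfl; simp at hz2
  have hdz : (fun j => (a j : ℂ) * z j ^ (a j - 1)) ⬝ᵥ (fun j => z j / (a j : ℝ)) = 0 := by
    simp only [dotProduct, ofReal_natCast, natCast_mul_pow_sub_one_mul_div (ha_ne _), hz1]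
  obtain ⟨w, hdw, hrew, hαw, hω⟩ := exists_dotProduct_eq_zero_and_im_weightedInner_pos
    (fun j => Nat.cast_pos.2 (Nat.pos_of_ne_zero (ha_ne j))) hz hdz hv
    hdv (by rwa [re_weightedInner_one]) (by rw [im_weightedInner]; linarith)
  rw [re_weightedInner_one] at hrew
  rw [im_weightedInner] at hαw hω
  exact ⟨w, hdw, hrew, by rw [hαw, mul_zero], by positivity⟩

/-- The 1-form `α` of Equation (4.1) is a contact form on the Brieskorn link:
at every `z ∈ Σ(a)`, the 2-form `ω = dα`, `ω(u,v) = (1/2) Σ_j a_j Im(conj u_j · v_j)`,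
is nondegenerate on the hyperplane
`ξ_z = {v : Σ_j a_j z_j^{a_j-1} v_j = 0, Re⟨z,v⟩ = 0, α_z(v) = 0}`,
where `α_z(v) = (1/4) Σ_j a_j Im(conj z_j · v_j)`. -/
theorem brieskorn_contact_condition
    (n : ℕ) (hn : 1 ≤ n) (a : Fin (n + 1) → ℕ) (ha : ∀ j, 2 ≤ a j)
    (z : Fin (n + 1) → ℂ)
    (hz1 : ∑ j, z j ^ a j = 0)
    (hz2 : ∑ j, Complex.normSq (z j) = 1) :
    ∀ v : Fin (n + 1) → ℂ, v ≠ 0 →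
      (∑ j, (a j : ℂ) * z j ^ (a j - 1) * v j = 0) →
      (∑ j, ((starRingEnd ℂ) (z j) * v j).re = 0) →
      ((1 / 4 : ℝ) * ∑ j, (a j : ℝ) * ((starRingEnd ℂ) (z j) * v j).im = 0) →
      ∃ w : Fin (n + 1) → ℂ,
        (∑ j, (a j : ℂ) * z j ^ (a j - 1) * w j = 0) ∧
        (∑ j, ((starRingEnd ℂ) (z j) * w j).re = 0) ∧
        ((1 / 4 : ℝ) * ∑ j, (a j : ℝ) * ((starRingEnd ℂ) (z j) * w j).im = 0) ∧
        (1 / 2 : ℝ) * ∑ j, (a j : ℝ) * ((starRingEnd ℂ) (v j) * w j).im ≠ 0 :=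
  brieskorn_contact_condition_general n a ha z hz1 hz2
end

section
/- Ustilovsky's dimension sequences distinguish the parameter p: fix an integer k ≥ 1 and set n = 2k+1. For an integer p > 2 with p ≡ ±1 (mod 8), define d_m(p) for m ∈ ℤ by: d_m(p) = 0 if m is odd or m < 2n−4; d_m(p) = 2 if m = 2⌊2N/p⌋ + 2(N+1)(n−2) for some integer N ≥ 1 such that 2N+1 is not divisible by p; and d_m(p) = 1 otherwise. Then for any two integers p ≠ q, both > 2 and both ≡ ±1 (mod 8), there exists m ∈ ℤ with d_m(p) ≠ d_m(q). -/
open Classical in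
/-- The dimension `d_m(p)` of `CH_m^{cyl}(S^{4k+1}, α_p)` in Ustilovsky's theorem
(Theorem 4.1), with `n = 2k+1`: it is `0` if `m` is odd or `m < 2n-4`, it is `2` if
`m = 2⌊2N/p⌋ + 2(N+1)(n-2)` for some integer `N ≥ 1` with `2N+1 ∉ pℤ`,
and it is `1` otherwise. -/
noncomputable def ustilovskyDim (k p : ℕ) (m : ℤ) : ℕ :=
  if Odd m ∨ m < 2 * (2 * (k : ℤ) + 1) - 4 then 0
  else if ∃ N : ℕ, 1 ≤ N ∧ ¬ (p : ℤ) ∣ (2 * (N : ℤ) + 1) ∧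
      m = 2 * ((2 * (N : ℤ)) / (p : ℤ)) + 2 * ((N : ℤ) + 1) * ((2 * (k : ℤ) + 1) - 2)
    then 2
  else 1

lemma ustilovsky_aux (k : ℕ) (hk : 1 ≤ k)
    (p q : ℕ) (hp7 : 7 ≤ p) (hpodd : p % 2 = 1) (hlt : p < q) :
    ∃ m : ℤ, ustilovskyDim k p m ≠ ustilovskyDim k q m := by
  obtain ⟨t, ht⟩ : ∃ t, p = 2 * t + 1 := ⟨p / 2, by omega⟩
  have ht3 : 3 ≤ t := by omega
  have hk' : (1 : ℤ) ≤ (k : ℤ) := by exact_mod_cast hk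
  have ht' : (3 : ℤ) ≤ (t : ℤ) := by exact_mod_cast ht3
  have hpz : (p : ℤ) = 2 * (t : ℤ) + 1 := by exact_mod_cast congrArg (Nat.cast : ℕ → ℤ) ht
  set m : ℤ := 2 * ((t : ℤ) + 1) * (2 * (k : ℤ) - 1) with hm
  refine ⟨m, ?_⟩
  have hfirst : ¬ (Odd m ∨ m < 2 * (2 * (k : ℤ) + 1) - 4) := by
    push_neg
    refine ⟨?_, by nlinarith⟩
    rw [Int.not_odd_iff_even]
    exact ⟨((t : ℤ) + 1) * (2 * (k : ℤ) - 1), by ring⟩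
  -- second condition holds for q
  have hsecq : ∃ N : ℕ, 1 ≤ N ∧ ¬ (q : ℤ) ∣ (2 * (N : ℤ) + 1) ∧
      m = 2 * ((2 * (N : ℤ)) / (q : ℤ)) + 2 * ((N : ℤ) + 1) * ((2 * (k : ℤ) + 1) - 2) := by
    refine ⟨t, by omega, ?_, ?_⟩
    · intro hdvd
      have hle : (q : ℤ) ≤ 2 * (t : ℤ) + 1 := Int.le_of_dvd (by linarith) hdvd
      have : (q : ℤ) > 2 * (t : ℤ) + 1 := by
        rw [← hpz]; exact_mod_cast hlt
      linarith
    · have hz : (2 * (t : ℤ)) / (q : ℤ) = 0 := by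
        apply Int.ediv_eq_zero_of_lt (by linarith)
        have : (p : ℤ) < (q : ℤ) := by exact_mod_cast hlt
        linarith [hpz]
      rw [hz]; ring
  -- second condition fails for p
  have hsecp : ¬ ∃ N : ℕ, 1 ≤ N ∧ ¬ (p : ℤ) ∣ (2 * (N : ℤ) + 1) ∧
      m = 2 * ((2 * (N : ℤ)) / (p : ℤ)) + 2 * ((N : ℤ) + 1) * ((2 * (k : ℤ) + 1) - 2) := by
    rintro ⟨N, hN1, hNdvd, hNm⟩
    set D : ℤ := (2 * (N : ℤ)) / (p : ℤ) with hD
    have hD0 : 0 ≤ D := Int.ediv_nonneg (by positivity) (by positivity)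
    have hDeq : D = ((t : ℤ) - (N : ℤ)) * (2 * (k : ℤ) - 1) := by
      have : m = 2 * D + 2 * ((N : ℤ) + 1) * ((2 * (k : ℤ) + 1) - 2) := hNm
      rw [hm] at this; linarith [this, mul_comm D (2:ℤ)]
    have hNle : (N : ℤ) ≤ (t : ℤ) := by nlinarith
    have hDz : D = 0 := by
      rw [hD]
      apply Int.ediv_eq_zero_of_lt (by positivity)
      rw [hpz]; linarith
    have hNt : (N : ℤ) = (t : ℤ) := by
      rw [hDz] at hDeq
      nlinarith
    exact hNdvd ⟨1, by rw [hNt, ← hpz]; ring⟩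
  refine fun h => ?_
  rw [ustilovskyDim, ustilovskyDim, if_neg hfirst, if_neg hfirst, if_neg hsecp,
    if_pos hsecq] at h
  exact absurd h (by norm_num)

/-- Ustilovsky's dimension sequences distinguish the parameter `p`: for distinct
integers `p, q > 2` with `p, q ≡ ±1 (mod 8)`, the sequences `(d_m(p))_m` and
`(d_m(q))_m` differ in some degree `m`. -/
theorem ustilovsky_sequences_distinguish_p
    (k : ℕ) (hk : 1 ≤ k)
    (p q : ℕ) (hp : 2 < p) (hq : 2 < q)
    (hp8 : p % 8 = 1 ∨ p % 8 = 7) (hq8 : q % 8 = 1 ∨ q % 8 = 7)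
    (hpq : p ≠ q) :
    ∃ m : ℤ, ustilovskyDim k p m ≠ ustilovskyDim k q m := by
  rcases lt_or_gt_of_ne hpq with h | h
  · exact ustilovsky_aux k hk p q (by omega) (by omega) h
  · obtain ⟨m, hm⟩ := ustilovsky_aux k hk q p (by omega) (by omega) h
    exact ⟨m, hm.symm⟩
end
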